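/- arXiv:2605.07387 — 4 statements merged into one kernel-verified Lean document; each statement's English description precedes it below -/
import Mathlib

section
/- For every natural number N ≥ 1 and every p ∈ [0,1], (1 - (1-p)^N)/(N·p) ≥ (1/N)·(1-p)^(N-1) (with the left side interpreted as 1 when p = 0). That is, the RFA expected-share function dominates the CFS expected-share function pointwise. -/
theorem rfa_dominates_cfs (N : ℕ) (hN : 1 ≤ N) (p : ℝ) (hp : p ∈ Set.Icc (0 : ℝ) 1) :
    (if p = 0 then (1 : ℝ) else (1 - (1 - p) ^ N) / (N * p))
      ≥ (1 / N) * (1 - p) ^ (N - 1) := by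
  obtain ⟨hp0, hp1⟩ := hp
  have hNpos : (0 : ℝ) < N := by exact_mod_cast hN
  by_cases h0 : p = 0
  · subst h0
    rw [if_pos rfl, sub_zero, one_pow, mul_one, ge_iff_le, div_le_one hNpos]
    exact_mod_cast hN
  · rw [if_neg h0]
    have hppos : 0 < p := lt_of_le_of_ne hp0 (Ne.symm h0)
    have hgeom : 1 - (1 - p) ^ N = p * ∑ i ∈ Finset.range N, (1 - p) ^ i := by
      linear_combination geom_sum_mul (1 - p) N
    have hsum : (1 - p) ^ (N - 1) ≤ ∑ i ∈ Finset.range N, (1 - p) ^ i := by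
      apply Finset.single_le_sum (f := fun i => (1 - p) ^ i)
      · intro i _; exact pow_nonneg (by linarith) i
      · exact Finset.mem_range.mpr (Nat.sub_lt (by omega) one_pos)
    rw [ge_iff_le, le_div_iff₀ (by positivity)]
    have heq : 1 / (N : ℝ) * (1 - p) ^ (N - 1) * (N * p) = p * (1 - p) ^ (N - 1) := by
      field_simp
    rw [heq, hgeom]
    exact mul_le_mul_of_nonneg_left hsum hppos.le
end

section
/- For any vector q ∈ [0,1]^m with Σ_{i=1}^m q_i = b (b a natural number with 0 ≤ b ≤ m), there exists a probability distribution p over the b-element subsets of {1,...,m} whose induced marginals equal q, i.e., q_i = Σ_{S : |S|=b, i ∈ S} p(S) for all i. -/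
lemma marg_base (m b : ℕ) (q : Fin m → ℝ) (hint : ∀ i, q i = 0 ∨ q i = 1)
    (hqsum : ∑ i, q i = b) :
    ∃ p : Finset (Fin m) → ℝ,
      (∀ S, 0 ≤ p S) ∧
      (∀ S : Finset (Fin m), S.card ≠ b → p S = 0) ∧
      (∑ S ∈ Finset.univ.filter (fun S : Finset (Fin m) => S.card = b), p S = 1) ∧
      (∀ i, q i = ∑ S ∈ Finset.univ.filter
          (fun S : Finset (Fin m) => S.card = b ∧ i ∈ S), p S) := by
  set S0 := Finset.univ.filter (fun i => q i = 1) with hS0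
  have hsum : ∑ i, q i = (S0.card : ℝ) := by
    rw [hS0, Finset.card_filter]
    push_cast
    refine Finset.sum_congr rfl fun i _ => ?_
    rcases hint i with h | h <;> simp [h]
  have hcard : S0.card = b := by
    have h := hsum.symm.trans hqsum
    exact_mod_cast h
  refine ⟨fun S => if S = S0 then 1 else 0, ?_, ?_, ?_, ?_⟩
  · intro S; dsimp only; split <;> norm_num
  · intro S hS
    have hne : S ≠ S0 := fun h => hS (h ▸ hcard)
    simp [hne]
  · rw [Finset.sum_ite_eq' _ S0 (fun _ => (1:ℝ))]
    simp [hcard]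
  · intro i
    rw [Finset.sum_ite_eq' _ S0 (fun _ => (1:ℝ))]
    by_cases hi : q i = 1
    · have hmem : i ∈ S0 := by simp [hS0, hi]
      simp [hcard, hmem, hi]
    · have hmem : i ∉ S0 := by simp [hS0, hi]
      have h0 : q i = 0 := (hint i).resolve_right hi
      simp [hcard, hmem, h0]

lemma marg_key (m b : ℕ) : ∀ n : ℕ, ∀ q : Fin m → ℝ,
    (∀ i, q i ∈ Set.Icc (0 : ℝ) 1) → (∑ i, q i = b) →
    (Finset.univ.filter (fun i => q i ≠ 0 ∧ q i ≠ 1)).card ≤ n →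
    ∃ p : Finset (Fin m) → ℝ,
      (∀ S, 0 ≤ p S) ∧
      (∀ S : Finset (Fin m), S.card ≠ b → p S = 0) ∧
      (∑ S ∈ Finset.univ.filter (fun S : Finset (Fin m) => S.card = b), p S = 1) ∧
      (∀ i, q i = ∑ S ∈ Finset.univ.filter
          (fun S : Finset (Fin m) => S.card = b ∧ i ∈ S), p S) := by
  intro n
  induction n with
  | zero =>
    intro q hq01 hqsum hcard
    have hempty : Finset.univ.filter (fun i => q i ≠ 0 ∧ q i ≠ 1) = ∅ :=
      Finset.card_eq_zero.mp (Nat.le_zero.mp hcard)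
    have hint : ∀ i, q i = 0 ∨ q i = 1 := by
      intro i
      by_contra hcon
      push_neg at hcon
      have : i ∈ Finset.univ.filter (fun i => q i ≠ 0 ∧ q i ≠ 1) := by
        simp [hcon.1, hcon.2]
      rw [hempty] at this
      exact absurd this (Finset.notMem_empty i)
    exact marg_base m b q hint hqsum
  | succ n ih =>
    intro q hq01 hqsum hcard
    by_cases hF : Finset.univ.filter (fun i => q i ≠ 0 ∧ q i ≠ 1) = ∅
    · have hint : ∀ i, q i = 0 ∨ q i = 1 := by
        intro i
        by_contra hcon
        push_neg at hcon
        have : i ∈ Finset.univ.filter (fun i => q i ≠ 0 ∧ q i ≠ 1) := by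
          simp [hcon.1, hcon.2]
        rw [hF] at this
        exact absurd this (Finset.notMem_empty i)
      exact marg_base m b q hint hqsum
    · obtain ⟨i, hi⟩ := Finset.nonempty_iff_ne_empty.mpr hF
      simp only [Finset.mem_filter] at hi
      obtain ⟨-, hi0, hi1⟩ := hi
      have hqi0 : 0 < q i := lt_of_le_of_ne (hq01 i).1 (Ne.symm hi0)
      have hqi1 : q i < 1 := lt_of_le_of_ne (hq01 i).2 hi1
      -- find a second fractional coordinate
      have hj : ∃ j, j ≠ i ∧ q j ≠ 0 ∧ q j ≠ 1 := by
        by_contra hcon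
        push_neg at hcon
        have hint : ∀ j ∈ Finset.univ.erase i, q j = 0 ∨ q j = 1 := by
          intro j hj
          rcases eq_or_ne (q j) 0 with h | h
          · exact Or.inl h
          · exact Or.inr (hcon j (Finset.ne_of_mem_erase hj) h)
        set t := ((Finset.univ.erase i).filter (fun k => q k = 1)).card with ht
        have hsum2 : ∑ k ∈ Finset.univ.erase i, q k = (t : ℝ) := by
          rw [ht, Finset.card_filter]
          push_cast
          refine Finset.sum_congr rfl fun k hk => ?_
          rcases hint k hk with h | h <;> simp [h]
        have htot : q i + ∑ k ∈ Finset.univ.erase i, q k = (b : ℝ) := by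
          rw [Finset.add_sum_erase _ _ (Finset.mem_univ i), hqsum]
        rw [hsum2] at htot
        have h1 : (t : ℝ) < (b : ℝ) := by linarith
        have h2 : (b : ℝ) < (t : ℝ) + 1 := by linarith
        have h1' : t < b := by exact_mod_cast h1
        have h2' : b < t + 1 := by exact_mod_cast h2
        omega
      obtain ⟨j, hji, hj0, hj1⟩ := hj
      have hij : i ≠ j := hji.symm
      have hqj0 : 0 < q j := lt_of_le_of_ne (hq01 j).1 (Ne.symm hj0)
      have hqj1 : q j < 1 := lt_of_le_of_ne (hq01 j).2 hj1
      set dp := min (1 - q i) (q j) with hdp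
      set dm := min (q i) (1 - q j) with hdm
      have hdp0 : 0 < dp := lt_min (by linarith) hqj0
      have hdm0 : 0 < dm := lt_min hqi0 (by linarith)
      have hdpi : dp ≤ 1 - q i := min_le_left _ _
      have hdpj : dp ≤ q j := min_le_right _ _
      have hdmi : dm ≤ q i := min_le_left _ _
      have hdmj : dm ≤ 1 - q j := min_le_right _ _
      set qp : Fin m → ℝ :=
        fun k => q k + (if k = i then dp else 0) - (if k = j then dp else 0) with hqp
      set qm : Fin m → ℝ :=
        fun k => q k - (if k = i then dm else 0) + (if k = j then dm else 0) with hqm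
      have hqpval : ∀ k, k ≠ i → k ≠ j → qp k = q k := by
        intro k h1 h2; simp [hqp, h1, h2]
      have hqmval : ∀ k, k ≠ i → k ≠ j → qm k = q k := by
        intro k h1 h2; simp [hqm, h1, h2]
      have hqpi : qp i = q i + dp := by simp [hqp, hij]
      have hqpj : qp j = q j - dp := by simp [hqp, hji]
      have hqmi : qm i = q i - dm := by simp [hqm, hij]
      have hqmj : qm j = q j + dm := by simp [hqm, hji]
      -- membership in [0,1]
      have hqp01 : ∀ k, qp k ∈ Set.Icc (0 : ℝ) 1 := by
        intro k
        rcases eq_or_ne k i with rfl | h1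
        · rw [hqpi]; constructor <;> [linarith; linarith]
        rcases eq_or_ne k j with rfl | h2
        · rw [hqpj]; constructor <;> [linarith; linarith [(hq01 k).2]]
        · rw [hqpval k h1 h2]; exact hq01 k
      have hqm01 : ∀ k, qm k ∈ Set.Icc (0 : ℝ) 1 := by
        intro k
        rcases eq_or_ne k i with rfl | h1
        · rw [hqmi]; constructor <;> [linarith; linarith [(hq01 k).2]]
        rcases eq_or_ne k j with rfl | h2
        · rw [hqmj]; constructor <;> [linarith; linarith]
        · rw [hqmval k h1 h2]; exact hq01 k
      -- sums
      have hsump : ∑ k, qp k = (b : ℝ) := by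
        simp only [hqp]
        rw [Finset.sum_sub_distrib, Finset.sum_add_distrib,
          Finset.sum_ite_eq' Finset.univ i (fun _ => dp),
          Finset.sum_ite_eq' Finset.univ j (fun _ => dp)]
        simp [hqsum]
      have hsumm : ∑ k, qm k = (b : ℝ) := by
        simp only [hqm]
        rw [Finset.sum_add_distrib, Finset.sum_sub_distrib,
          Finset.sum_ite_eq' Finset.univ i (fun _ => dm),
          Finset.sum_ite_eq' Finset.univ j (fun _ => dm)]
        simp [hqsum]
      -- fractional sets shrink
      have hsubp : Finset.univ.filter (fun k => qp k ≠ 0 ∧ qp k ≠ 1) ⊆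
          Finset.univ.filter (fun k => q k ≠ 0 ∧ q k ≠ 1) := by
        intro k hk
        simp only [Finset.mem_filter, Finset.mem_univ, true_and] at hk ⊢
        rcases eq_or_ne k i with rfl | h1
        · exact ⟨hi0, hi1⟩
        rcases eq_or_ne k j with rfl | h2
        · exact ⟨hj0, hj1⟩
        · rwa [hqpval k h1 h2] at hk
      have hsubm : Finset.univ.filter (fun k => qm k ≠ 0 ∧ qm k ≠ 1) ⊆
          Finset.univ.filter (fun k => q k ≠ 0 ∧ q k ≠ 1) := by
        intro k hk
        simp only [Finset.mem_filter, Finset.mem_univ, true_and] at hk ⊢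
        rcases eq_or_ne k i with rfl | h1
        · exact ⟨hi0, hi1⟩
        rcases eq_or_ne k j with rfl | h2
        · exact ⟨hj0, hj1⟩
        · rwa [hqmval k h1 h2] at hk
      have hltp : (Finset.univ.filter (fun k => qp k ≠ 0 ∧ qp k ≠ 1)).card ≤ n := by
        have hmissing : ∃ k ∈ Finset.univ.filter (fun k => q k ≠ 0 ∧ q k ≠ 1),
            k ∉ Finset.univ.filter (fun k => qp k ≠ 0 ∧ qp k ≠ 1) := by
          rcases min_choice (1 - q i) (q j) with h | h
          · refine ⟨i, by simp [hi0, hi1], ?_⟩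
            have : qp i = 1 := by rw [hqpi, hdp, h]; ring
            simp [this]
          · refine ⟨j, by simp [hj0, hj1], ?_⟩
            have : qp j = 0 := by rw [hqpj, hdp, h]; ring
            simp [this]
        have hss := (Finset.ssubset_iff_of_subset hsubp).mpr hmissing
        have := Finset.card_lt_card hss
        omega
      have hltm : (Finset.univ.filter (fun k => qm k ≠ 0 ∧ qm k ≠ 1)).card ≤ n := by
        have hmissing : ∃ k ∈ Finset.univ.filter (fun k => q k ≠ 0 ∧ q k ≠ 1),
            k ∉ Finset.univ.filter (fun k => qm k ≠ 0 ∧ qm k ≠ 1) := by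
          rcases min_choice (q i) (1 - q j) with h | h
          · refine ⟨i, by simp [hi0, hi1], ?_⟩
            have : qm i = 0 := by rw [hqmi, hdm, h]; ring
            simp [this]
          · refine ⟨j, by simp [hj0, hj1], ?_⟩
            have : qm j = 1 := by rw [hqmj, hdm, h]; ring
            simp [this]
        have hss := (Finset.ssubset_iff_of_subset hsubm).mpr hmissing
        have := Finset.card_lt_card hss
        omega
      obtain ⟨pp, hpp0, hppz, hpps, hppm⟩ := ih qp hqp01 hsump hltp
      obtain ⟨pm, hpm0, hpmz, hpms, hpmm⟩ := ih qm hqm01 hsumm hltm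
      set l := dm / (dp + dm) with hl
      have hdd : (0 : ℝ) < dp + dm := by linarith
      have hl0 : 0 ≤ l := div_nonneg hdm0.le hdd.le
      have hl1 : l ≤ 1 := by
        rw [hl, div_le_one hdd]; linarith
      have hco : ∀ k, q k = l * qp k + (1 - l) * qm k := by
        intro k
        rcases eq_or_ne k i with rfl | h1
        · rw [hqpi, hqmi, hl]; field_simp; ring
        rcases eq_or_ne k j with rfl | h2
        · rw [hqpj, hqmj, hl]; field_simp; ring
        · rw [hqpval k h1 h2, hqmval k h1 h2]; ring
      refine ⟨fun S => l * pp S + (1 - l) * pm S, ?_, ?_, ?_, ?_⟩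
      · intro S
        have := hpp0 S; have := hpm0 S
        have h1l : 0 ≤ 1 - l := by linarith
        positivity
      · intro S hS
        simp [hppz S hS, hpmz S hS]
      · rw [Finset.sum_add_distrib, ← Finset.mul_sum, ← Finset.mul_sum, hpps, hpms]
        ring
      · intro k
        rw [Finset.sum_add_distrib, ← Finset.mul_sum, ← Finset.mul_sum,
          ← hppm k, ← hpmm k]
        exact hco k

theorem marginals_realizable (m b : ℕ) (hbm : b ≤ m)
    (q : Fin m → ℝ) (hq01 : ∀ i, q i ∈ Set.Icc (0 : ℝ) 1)
    (hqsum : ∑ i, q i = b) :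
    ∃ p : Finset (Fin m) → ℝ,
      (∀ S, 0 ≤ p S) ∧
      (∀ S : Finset (Fin m), S.card ≠ b → p S = 0) ∧
      (∑ S ∈ Finset.univ.filter (fun S : Finset (Fin m) => S.card = b), p S = 1) ∧
      (∀ i, q i = ∑ S ∈ Finset.univ.filter
          (fun S : Finset (Fin m) => S.card = b ∧ i ∈ S), p S) := by
  exact marg_key m b m q hq01 hqsum
    (le_trans (Finset.card_filter_le _ _) (by simp))
end

section
/- Fix N ≥ 1, m ≥ 1, and 0 ≤ b ≤ m. Among all q ∈ [0,1]^m with Σ q_i = b, the effective transaction throughput Θ_tx(q) = Σ_{i=1}^m (1 - (1-q_i)^N) is maximized by the uniform vector q_i = b/m for all i. -/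
/-!
Since `Θ_tx(q) = m - ∑ (1 - q i) ^ N`, maximizing it means minimizing `∑ (1 - q i) ^ N` under the
constraint `∑ (1 - q i) = m - b`; by Jensen's inequality for the convex map `x ↦ x ^ N` on
`[0, ∞)`, the minimum is attained where all `1 - q i` equal their mean `1 - b / m`.
-/

open Finset

theorem card_mul_pow_mean_le_sum_pow {ι : Type*} [Fintype ι] {f : ι → ℝ} (hf : ∀ i, 0 ≤ f i)
    (n : ℕ) : Fintype.card ι * ((∑ i, f i) / Fintype.card ι) ^ n ≤ ∑ i, f i ^ n := by
  rcases isEmpty_or_nonempty ι with hι | hι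
  · simp
  have hcard : (0 : ℝ) < Fintype.card ι := by exact_mod_cast Fintype.card_pos
  have jensen := (convexOn_pow n).map_sum_le (t := univ) (w := fun _ => (Fintype.card ι : ℝ)⁻¹)
    (p := f) (fun _ _ => by positivity) (by simp [hcard.ne']) (fun i _ => hf i)
  simp only [smul_eq_mul, ← mul_sum] at jensen
  rw [inv_mul_eq_div, inv_mul_eq_div, le_div_iff₀ hcard] at jensen
  linarith

theorem uniform_maximizes_tx_throughput_general (N m b : ℕ)
    (q : Fin m → ℝ) (hq01 : ∀ i, q i ∈ Set.Icc (0 : ℝ) 1) (hqsum : ∑ i, q i = b) :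
    ∑ i, (1 - (1 - q i) ^ N) ≤ ∑ _i : Fin m, (1 - (1 - (b : ℝ) / m) ^ N) := by
  rcases Nat.eq_zero_or_pos m with rfl | hm
  · simp
  have hmean : (∑ i, (1 - q i)) / Fintype.card (Fin m) = 1 - (b : ℝ) / m := by
    rw [sum_sub_distrib, hqsum, Fintype.card_fin, sub_div, sum_const, card_univ,
      Fintype.card_fin, nsmul_one, div_self (by positivity)]
  have jensen := card_mul_pow_mean_le_sum_pow (fun i => sub_nonneg.2 (hq01 i).2) N
  rw [hmean, Fintype.card_fin] at jensen
  simp only [sum_sub_distrib, sum_const, card_univ, Fintype.card_fin, nsmul_eq_mul, mul_one]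
  linarith

theorem uniform_maximizes_tx_throughput (N m b : ℕ) (hN : 1 ≤ N) (hm : 1 ≤ m) (hbm : b ≤ m)
    (q : Fin m → ℝ) (hq01 : ∀ i, q i ∈ Set.Icc (0 : ℝ) 1) (hqsum : ∑ i, q i = b) :
    ∑ i, (1 - (1 - q i) ^ N) ≤ ∑ _i : Fin m, (1 - (1 - (b : ℝ) / m) ^ N) :=
  uniform_maximizes_tx_throughput_general N m b q hq01 hqsum
end

section
/- Fix N ≥ 2, m ≥ 2, 0 < b < m, and strictly positive fees v_1, ..., v_m. Any maximizer q* of Θ(q) = Σ_i v_i·(1 - (1-q_i)^N) over {q ∈ [0,1]^m : Σ q_i = b} satisfies: for all i, j, if v_i > v_j then q*_i ≥ q*_j. -/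
theorem maximizer_monotone_in_fee (N m b : ℕ) (hN : 2 ≤ N) (hm : 2 ≤ m)
    (hb : 0 < b) (hbm : b < m)
    (v : Fin m → ℝ) (hv : ∀ i, 0 < v i)
    (qstar : Fin m → ℝ) (hq01 : ∀ i, qstar i ∈ Set.Icc (0 : ℝ) 1)
    (hqsum : ∑ i, qstar i = b)
    (hmax : ∀ q : Fin m → ℝ, (∀ i, q i ∈ Set.Icc (0 : ℝ) 1) → ∑ i, q i = b →
      ∑ i, v i * (1 - (1 - q i) ^ N) ≤ ∑ i, v i * (1 - (1 - qstar i) ^ N)) :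
    ∀ i j, v i > v j → qstar i ≥ qstar j := by
  intro i j hvij
  by_contra h
  push_neg at h
  have hij : i ≠ j := by rintro rfl; exact lt_irrefl _ h
  set q' : Fin m → ℝ := fun k => qstar (Equiv.swap i j k) with hq'
  have hq'i : q' i = qstar j := by simp [hq']
  have hq'j : q' j = qstar i := by simp [hq']
  have hq'k : ∀ k, k ≠ i → k ≠ j → q' k = qstar k := by
    intro k h1 h2; simp [hq', Equiv.swap_apply_of_ne_of_ne h1 h2]
  have hq'01 : ∀ k, q' k ∈ Set.Icc (0:ℝ) 1 := fun k => hq01 _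
  have hq'sum : ∑ k, q' k = b := by
    rw [← hqsum]; exact Fintype.sum_equiv (Equiv.swap i j) _ _ (fun k => rfl)
  have hle := hmax q' hq'01 hq'sum
  have hf : (0:ℝ) < (1 - (1 - qstar j)^N) - (1 - (1 - qstar i)^N) := by
    have h1 : (1 - qstar j) < (1 - qstar i) := by linarith
    have h2 : 0 ≤ 1 - qstar j := by have := (hq01 j).2; linarith
    have := pow_lt_pow_left₀ h1 h2 (by omega : N ≠ 0)
    linarith
  have key : ∑ k, v k * (1 - (1 - q' k)^N) - ∑ k, v k * (1 - (1 - qstar k)^N)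
      = (v i - v j) * ((1 - (1 - qstar j)^N) - (1 - (1 - qstar i)^N)) := by
    rw [← Finset.sum_sub_distrib]
    rw [← Finset.sum_subset (Finset.subset_univ ({i, j} : Finset (Fin m)))]
    · rw [Finset.sum_pair hij, hq'i, hq'j]; ring
    · intro k _ hk
      simp only [Finset.mem_insert, Finset.mem_singleton] at hk
      push_neg at hk
      rw [hq'k k hk.1 hk.2]; ring
  have hprod : 0 < (v i - v j) * ((1 - (1 - qstar j)^N) - (1 - (1 - qstar i)^N)) :=
    mul_pos (by linarith) hf
  linarith
end
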